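/- arXiv:2112.14596 — 5 statements merged into one kernel-verified Lean document; each statement's English description precedes it below -/
import Mathlib

section
/- There do not exist integers a, b, c, p, q, r satisfying simultaneously: a² + (a+1)² + 2b² + 2c² = 7, 2p² + q² + (q+1)² + 2r² = 11, and (2a+1)p + b(2q+1) + 2cr = 0. -/
/-!
With `u = 2a + 1` and `v = 2q + 1` the system reads `u² + 4(b² + c²) = 13`,
`v² + 4(p² + r²) = 21` and `u p + b v + 2 c r = 0`. The only odd squares below `25` are `1` and `9`,
and `3` is not a sum of two squares, so `u² = 9`, `b² + c² = 1`, `v² = 1` and `p² + r² = 5`.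
Exactly one of `b`, `c` is nonzero, and squaring the last equation gives `9 p² = 1` or
`9 p² = 4 r² = 20 - 4 p²`, both impossible.
-/

theorem Int.sq_add_sq_ne_three (x y : ℤ) : x ^ 2 + y ^ 2 ≠ 3 := by
  intro h
  have h4 := congrArg (fun z : ℤ => (z : ZMod 4)) h
  push_cast at h4
  generalize (x : ZMod 4) = X at h4
  generalize (y : ZMod 4) = Y at h4
  revert X Y
  decide

theorem Int.sq_eq_one_or_nine_of_odd {u : ℤ} (hu : Odd u) (h : u ^ 2 < 25) :
    u ^ 2 = 1 ∨ u ^ 2 = 9 := by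
  have hlt : |u| < 5 := abs_lt_of_sq_lt_sq (by linarith) (by norm_num)
  obtain ⟨hl, hr⟩ := abs_lt.mp hlt
  interval_cases u <;> revert hu <;> decide

theorem Int.eq_zero_or_eq_zero_of_sq_add_sq_eq_one {b c : ℤ} (h : b ^ 2 + c ^ 2 = 1) :
    b = 0 ∨ c = 0 := by
  by_contra! ⟨hb0, hc0⟩
  have hb : 0 < b ^ 2 := by positivity
  have hc : 0 < c ^ 2 := by positivity
  omega

theorem Int.mul_add_mul_add_two_mul_ne_zero {u v b c p r : ℤ} (hu : u ^ 2 = 9) (hv : v ^ 2 = 1)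
    (hbc : b ^ 2 + c ^ 2 = 1) (hpr : p ^ 2 + r ^ 2 = 5) : u * p + b * v + 2 * c * r ≠ 0 := by
  intro h
  have hsq : 9 * p ^ 2 = (b * v + 2 * c * r) ^ 2 := by
    linear_combination (u * p - b * v - 2 * c * r) * h - p ^ 2 * hu
  rcases Int.eq_zero_or_eq_zero_of_sq_add_sq_eq_one hbc with rfl | rfl
  · have hc : c ^ 2 = 1 := by simpa using hbc
    have : 9 * p ^ 2 = 4 * r ^ 2 := by rw [hsq]; linear_combination 4 * r ^ 2 * hc
    omega
  · have hb : b ^ 2 = 1 := by simpa using hbc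
    have : 9 * p ^ 2 = 1 := by rw [hsq]; linear_combination hv + v ^ 2 * hb
    omega

theorem stmt_3 :
    ¬ ∃ a b c p q r : ℤ,
      a ^ 2 + (a + 1) ^ 2 + 2 * b ^ 2 + 2 * c ^ 2 = 7 ∧
      2 * p ^ 2 + q ^ 2 + (q + 1) ^ 2 + 2 * r ^ 2 = 11 ∧
      (2 * a + 1) * p + b * (2 * q + 1) + 2 * c * r = 0 := by
  rintro ⟨a, b, c, p, q, r, h1, h2, h3⟩
  have hu : (2 * a + 1) ^ 2 + 4 * (b ^ 2 + c ^ 2) = 13 := by linear_combination 2 * h1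
  have hv : (2 * q + 1) ^ 2 + 4 * (p ^ 2 + r ^ 2) = 21 := by linear_combination 2 * h2
  have hbc3 := Int.sq_add_sq_ne_three b c
  have hpr3 := Int.sq_add_sq_ne_three p r
  have hbc0 : 0 ≤ b ^ 2 + c ^ 2 := by positivity
  have hpr0 : 0 ≤ p ^ 2 + r ^ 2 := by positivity
  have hu9 : (2 * a + 1) ^ 2 = 9 := by
    rcases Int.sq_eq_one_or_nine_of_odd (odd_two_mul_add_one a) (by omega) with h | h <;> omega
  have hv1 : (2 * q + 1) ^ 2 = 1 := by
    rcases Int.sq_eq_one_or_nine_of_odd (odd_two_mul_add_one q) (by omega) with h | h <;> omega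
  exact Int.mul_add_mul_add_two_mul_ne_zero hu9 hv1 (by omega) (by omega) h3
end

section
/- Let p, r be integers with p ≥ 3 and r > p + 6. Then there are no integers a₁, a₂, b₁, b₂ with a₁ + a₂ = 1 and a₁²·p + a₂²·r + 2b₁² + 2b₂² = p + 6. -/
theorem stmt_7 (p r : ℤ) (hp : 3 ≤ p) (hr : p + 6 < r) :
    ¬ ∃ a₁ a₂ b₁ b₂ : ℤ, a₁ + a₂ = 1 ∧
      a₁ ^ 2 * p + a₂ ^ 2 * r + 2 * b₁ ^ 2 + 2 * b₂ ^ 2 = p + 6 := by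
  rintro ⟨a₁, a₂, b₁, b₂, hsum, heq⟩
  obtain rfl : a₁ = 1 - a₂ := by omega
  rcases eq_or_ne a₂ 0 with rfl | ha₂
  · exact Int.sq_add_sq_ne_three b₁ b₂ (by linarith)
  · have ha₂_sq : 1 ≤ a₂ ^ 2 := (one_le_sq_iff_one_le_abs a₂).mpr (Int.one_le_abs ha₂)
    nlinarith [mul_nonneg (sq_nonneg (1 - a₂)) (by omega : (0 : ℤ) ≤ p), sq_nonneg b₁, sq_nonneg b₂]
end

section
/- Let p ≥ 3 and k ≥ 1 and m ≥ 0 be integers. Suppose for each j ∈ {1,…,k} we have vectors a^j ∈ ℤ^{k+1} and b^j ∈ ℤ^m satisfying: (i) Σᵢ aᵢ^j = 1; (ii) p·Σᵢ (aᵢ^j)² + 2·Σ_ℓ (b_ℓ^j)² = p + 2; and (iii) for all j ≠ j', p·Σᵢ aᵢ^j aᵢ^{j'} + 2·Σ_ℓ b_ℓ^j b_ℓ^{j'} = 0. Then k ≤ m. -/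
/-!
Since `x ≤ x ^ 2` on `ℤ`, condition (i) gives `∑ᵢ (aᵢʲ)² ≥ 1`, and then (ii) with `p ≥ 3` forces
`∑ᵢ (aᵢʲ)² = ∑ₗ (bₗʲ)² = 1`. So each `bʲ` is a signed standard basis vector `± e_{τ j}`. If
`τ j = τ j'` for `j ≠ j'`, then `∑ₗ bₗʲ bₗʲ' = ±1` and (iii) makes `p` divide `2`, which is
impossible. Hence `τ : Fin k → Fin m` is injective.
-/

theorem Int.sum_le_sum_sq {ι : Type*} (s : Finset ι) (c : ι → ℤ) :
    ∑ i ∈ s, c i ≤ ∑ i ∈ s, c i ^ 2 :=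
  Finset.sum_le_sum fun i _ => Int.le_self_sq (c i)

theorem Int.exists_isUnit_of_sum_sq_eq_one {ι : Type*} [Fintype ι] (c : ι → ℤ)
    (h : ∑ i, c i ^ 2 = 1) : ∃ l, IsUnit (c l) ∧ ∀ i, i ≠ l → c i = 0 := by
  classical
  obtain ⟨l, hl⟩ : ∃ l, c l ≠ 0 := by
    by_contra! h0
    simp [h0] at h
  have hsplit := Finset.add_sum_erase Finset.univ (fun i => c i ^ 2) (Finset.mem_univ l)
  have hcl_pos : 0 < c l ^ 2 := by positivity
  have hrest_nonneg : 0 ≤ ∑ i ∈ Finset.univ.erase l, c i ^ 2 :=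
    Finset.sum_nonneg fun i _ => sq_nonneg _
  have hcl : c l ^ 2 = 1 := by linarith
  have hrest : ∑ i ∈ Finset.univ.erase l, c i ^ 2 = 0 := by linarith
  refine ⟨l, IsUnit.of_pow_eq_one hcl two_ne_zero, fun i hi => ?_⟩
  have := (Finset.sum_eq_zero_iff_of_nonneg fun i _ => sq_nonneg (c i)).mp hrest i
    (Finset.mem_erase.mpr ⟨hi, Finset.mem_univ _⟩)
  exact pow_eq_zero_iff two_ne_zero |>.mp this

theorem Int.eq_one_of_mul_add_two_mul_eq {p x y : ℤ} (hp : 3 ≤ p) (hx : 1 ≤ x) (hy : 0 ≤ y)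
    (h : p * x + 2 * y = p + 2) : x = 1 ∧ y = 1 := by
  have hx1 : x = 1 := by nlinarith
  subst hx1
  constructor <;> linarith

theorem stmt_14_general (p : ℤ) (hp : 3 ≤ p) (k m : ℕ)
    (a : Fin k → Fin (k + 1) → ℤ) (b : Fin k → Fin m → ℤ)
    (h1 : ∀ j, ∑ i, a j i = 1)
    (h2 : ∀ j, p * ∑ i, (a j i) ^ 2 + 2 * ∑ l, (b j l) ^ 2 = p + 2)
    (h3 : ∀ j j', j ≠ j' → p * ∑ i, a j i * a j' i + 2 * ∑ l, b j l * b j' l = 0) :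
    k ≤ m := by
  have hb_norm : ∀ j, ∑ l, b j l ^ 2 = 1 := fun j =>
    (Int.eq_one_of_mul_add_two_mul_eq hp ((h1 j).symm.trans_le (Int.sum_le_sum_sq _ _))
      (Finset.sum_nonneg fun l _ => sq_nonneg _) (h2 j)).2
  choose τ hτ_unit hτ_zero using fun j => Int.exists_isUnit_of_sum_sq_eq_one (b j) (hb_norm j)
  have hτ : Function.Injective τ := by
    intro j j' hjj'
    by_contra hne
    have hdot : ∑ l, b j l * b j' l = b j (τ j) * b j' (τ j) :=
      Fintype.sum_eq_single _ fun l hl => by rw [hτ_zero j l hl, zero_mul]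
    have hdot_unit : IsUnit (b j (τ j) * b j' (τ j)) := (hτ_unit j).mul (hjj' ▸ hτ_unit j')
    have hp_dvd : p ∣ 2 := by
      rw [← hdot_unit.dvd_mul_right, ← hdot]
      exact ⟨-∑ i, a j i * a j' i, by linarith [h3 j j' hne]⟩
    have := Int.le_of_dvd two_pos hp_dvd
    omega
  simpa using Fintype.card_le_of_injective τ hτ

theorem stmt_14 (p : ℤ) (hp : 3 ≤ p) (k m : ℕ) (hk : 1 ≤ k)
    (a : Fin k → Fin (k + 1) → ℤ) (b : Fin k → Fin m → ℤ)
    (h1 : ∀ j, ∑ i, a j i = 1)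
    (h2 : ∀ j, p * ∑ i, (a j i) ^ 2 + 2 * ∑ l, (b j l) ^ 2 = p + 2)
    (h3 : ∀ j j', j ≠ j' → p * ∑ i, a j i * a j' i + 2 * ∑ l, b j l * b j' l = 0) :
    k ≤ m :=
  stmt_14_general p hp k m a b h1 h2 h3
end

section
/- Let p, q, r be integers with p < 0 and p ≡ 0 or 3 (mod 4). Then there exists an integer x with x ≡ 1 (mod 4) such that f := p·x² + 2(2q+1)·x + 4r satisfies f ≤ −1 and (−f − 1) ≡ 1 or 2 (mod 4). -/
/-! For `x ≡ 1 (mod 4)` the framing `f = p x² + 2(2q+1) x + 4r` is `≡ p + 2 (mod 4)`, so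
`-f - 1 ≡ 1 - p`, which is `1` or `2` modulo 4 exactly when `p ≡ 0` or `3`. Since `p < 0`, `f` is
a quadratic with negative leading coefficient, hence `f ≤ -1` once `x` is large. -/

theorem quadratic_le_neg_one_of_le {a b c x : ℤ} (ha : a ≤ -1) (hx : |b| + |c| + 1 ≤ x) :
    a * x ^ 2 + b * x + c ≤ -1 := by
  have hx1 : 1 ≤ x := by linarith [abs_nonneg b, abs_nonneg c]
  have hx0 : 0 ≤ x := by linarith
  calc a * x ^ 2 + b * x + c ≤ -1 * x ^ 2 + |b| * x + |c| * x := by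
        gcongr
        · exact le_abs_self b
        · exact (le_abs_self c).trans (le_mul_of_one_le_right (abs_nonneg c) hx1)
    _ = x * (|b| + |c| - x) := by ring
    _ ≤ x * -1 := mul_le_mul_of_nonneg_left (by linarith) hx0
    _ ≤ -1 := by linarith

theorem framing_modEq_of_emod_four_eq_one {p q r x : ℤ} (hx : x % 4 = 1) :
    p * x ^ 2 + 2 * (2 * q + 1) * x + 4 * r ≡ p + 2 [ZMOD 4] := by
  obtain ⟨k, rfl⟩ : ∃ k, x = 4 * k + 1 := ⟨x / 4, by omega⟩
  exact (Int.modEq_iff_dvd.2 ⟨p * (4 * k ^ 2 + 2 * k) + q * (4 * k + 1) + 2 * k + r, by ring⟩).symm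

theorem stmt_15 (p q r : ℤ) (hp : p < 0) (hmod : p % 4 = 0 ∨ p % 4 = 3) :
    ∃ x : ℤ, x % 4 = 1 ∧
      p * x ^ 2 + 2 * (2 * q + 1) * x + 4 * r ≤ -1 ∧
      ((-(p * x ^ 2 + 2 * (2 * q + 1) * x + 4 * r) - 1) % 4 = 1 ∨
        (-(p * x ^ 2 + 2 * (2 * q + 1) * x + 4 * r) - 1) % 4 = 2) := by
  obtain ⟨N, hN, hbound⟩ : ∃ N : ℤ, 0 ≤ N ∧ N = |2 * (2 * q + 1)| + |4 * r| + 1 :=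
    ⟨_, by positivity, rfl⟩
  have hx : (4 * N + 1) % 4 = 1 := by omega
  have hf := framing_modEq_of_emod_four_eq_one (p := p) (q := q) (r := r) hx
  refine ⟨4 * N + 1, hx, quadratic_le_neg_one_of_le (by omega) (by omega), ?_⟩
  unfold Int.ModEq at hf
  omega
end

section
/- Let n ≥ 1, let a₁, …, aₙ be integers with aᵢ ≥ 3 for all i, and let m ≥ 0. Suppose for each i ∈ {1,…,n} we have integers cᵢ, bᵢ¹,…,bᵢⁿ (with bᵢⁱ excluded, i.e. bᵢʲ for j ≠ i) and dᵢ¹,…,dᵢᵐ satisfying Σ_{j≠i} 2(bᵢʲ)²·aⱼ + cᵢ²·(2aᵢ − 1) + (cᵢ + 1)² + 2·Σ_ℓ (dᵢ^ℓ)² = 3, and for all i ≠ i', Σ_ℓ dᵢ^ℓ d_{i'}^ℓ = 0 whenever cᵢ = c_{i'} = 0 and all bᵢʲ = 0. Then: for each i, cᵢ = 0, all bᵢʲ = 0, and Σ_ℓ (dᵢ^ℓ)² = 1; consequently the n vectors (dᵢ¹,…,dᵢᵐ) are orthonormal in ℤ^m and n ≤ m. -/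
/-!
Every term on the left of the defining equation is a nonnegative integer. Since `2aᵢ - 1 > 3`
and `2aⱼ > 2`, any nonzero `cᵢ` or `bᵢʲ` would overshoot, which leaves `(cᵢ + 1)² = 1` and
`2 Σ_ℓ (dᵢ^ℓ)² = 2`. The vectors `dᵢ` are then orthonormal, so the `n × m` matrix `D` with rows
`dᵢ` satisfies `D Dᵀ = 1`, and `n = rank 1 ≤ rank D ≤ m`.
-/

theorem Int.eq_zero_of_mul_sq_lt {k x : ℤ} (hk : 0 ≤ k) (h : k * x ^ 2 < k) : x = 0 := by
  by_contra hx
  have : 1 ≤ x ^ 2 := by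
    rcases lt_or_gt_of_ne hx with hx | hx <;> nlinarith
  nlinarith

theorem Matrix.card_le_card_of_mul_eq_one {m n R : Type*} [Fintype m] [Fintype n] [DecidableEq m]
    [CommRing R] [StrongRankCondition R] {A : Matrix m n R} {B : Matrix n m R} (h : A * B = 1) :
    Fintype.card m ≤ Fintype.card n :=
  calc Fintype.card m = (1 : Matrix m m R).rank := Matrix.rank_one.symm
    _ = (A * B).rank := by rw [h]
    _ ≤ A.rank := A.rank_mul_le_left B
    _ ≤ Fintype.card n := A.rank_le_card_width

theorem le_of_sum_mul_eq_ite {n m : ℕ} (d : Fin n → Fin m → ℤ)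
    (h : ∀ i i', ∑ l, d i l * d i' l = if i = i' then 1 else 0) : n ≤ m := by
  have hD : Matrix.of d * (Matrix.of d).transpose = 1 := by
    ext i i'
    simpa [Matrix.mul_apply, Matrix.one_apply] using h i i'
  simpa using Matrix.card_le_card_of_mul_eq_one hD

theorem eq_zero_and_sum_sq_eq_one_of_weighted_sum_eq_three {ι κ : Type*} [Fintype κ]
    (s : Finset ι) (a b : ι → ℤ) (ha : ∀ j ∈ s, 3 ≤ a j) (a₀ c : ℤ) (ha₀ : 3 ≤ a₀) (d : κ → ℤ)
    (heq : (∑ j ∈ s, 2 * b j ^ 2 * a j) + c ^ 2 * (2 * a₀ - 1) + (c + 1) ^ 2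
        + 2 * ∑ l, d l ^ 2 = 3) :
    c = 0 ∧ (∀ j ∈ s, b j = 0) ∧ ∑ l, d l ^ 2 = 1 := by
  have hterm_nonneg : ∀ j ∈ s, 0 ≤ 2 * b j ^ 2 * a j := fun j hj => by
    have := ha j hj
    positivity
  have hB := Finset.sum_nonneg hterm_nonneg
  have hD : 0 ≤ ∑ l, d l ^ 2 := Finset.sum_nonneg fun l _ => sq_nonneg (d l)
  have hc : c = 0 :=
    Int.eq_zero_of_mul_sq_lt (k := 2 * a₀ - 1) (by linarith)
      (by nlinarith [sq_nonneg (c + 1)])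
  subst hc
  have hb : ∀ j ∈ s, b j = 0 := fun j hj => by
    have hle := Finset.single_le_sum hterm_nonneg hj
    exact Int.eq_zero_of_mul_sq_lt (k := 2 * a j) (by linarith [ha j hj])
      (by nlinarith [ha j hj])
  have hB0 : ∑ j ∈ s, 2 * b j ^ 2 * a j = 0 :=
    Finset.sum_eq_zero fun j hj => by simp [hb j hj]
  exact ⟨rfl, hb, by linarith⟩

theorem stmt_19_general (n m : ℕ) (a : Fin n → ℤ) (ha : ∀ i, 3 ≤ a i)
    (c : Fin n → ℤ) (b : Fin n → Fin n → ℤ) (d : Fin n → Fin m → ℤ)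
    (heq : ∀ i, (∑ j ∈ Finset.univ.erase i, 2 * (b i j) ^ 2 * a j) +
        (c i) ^ 2 * (2 * a i - 1) + (c i + 1) ^ 2 + 2 * ∑ l, (d i l) ^ 2 = 3)
    (horth : ∀ i i', i ≠ i' → c i = 0 → c i' = 0 →
        (∀ j, j ≠ i → b i j = 0) → (∀ j, j ≠ i' → b i' j = 0) →
        ∑ l, d i l * d i' l = 0) :
    (∀ i, c i = 0 ∧ (∀ j, j ≠ i → b i j = 0) ∧ ∑ l, (d i l) ^ 2 = 1) ∧
    (∀ i i', ∑ l, d i l * d i' l = if i = i' then 1 else 0) ∧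
    n ≤ m := by
  have hrow : ∀ i, c i = 0 ∧ (∀ j, j ≠ i → b i j = 0) ∧ ∑ l, (d i l) ^ 2 = 1 := fun i => by
    obtain ⟨hc, hb, hd⟩ := eq_zero_and_sum_sq_eq_one_of_weighted_sum_eq_three _ a (b i)
      (fun j _ => ha j) (a i) (c i) (ha i) (d i) (heq i)
    exact ⟨hc, fun j hj => hb j (Finset.mem_erase.mpr ⟨hj, Finset.mem_univ j⟩), hd⟩
  have hdot : ∀ i i', ∑ l, d i l * d i' l = if i = i' then 1 else 0 := fun i i' => by
    split_ifs with h
    · subst h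
      simpa [sq] using (hrow i).2.2
    · exact horth i i' h (hrow i).1 (hrow i').1 (hrow i).2.1 (hrow i').2.1
  exact ⟨hrow, hdot, le_of_sum_mul_eq_ite d hdot⟩

theorem stmt_19 (n m : ℕ) (hn : 1 ≤ n) (a : Fin n → ℤ) (ha : ∀ i, 3 ≤ a i)
    (c : Fin n → ℤ) (b : Fin n → Fin n → ℤ) (d : Fin n → Fin m → ℤ)
    (heq : ∀ i, (∑ j ∈ Finset.univ.erase i, 2 * (b i j) ^ 2 * a j) +
        (c i) ^ 2 * (2 * a i - 1) + (c i + 1) ^ 2 + 2 * ∑ l, (d i l) ^ 2 = 3)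
    (horth : ∀ i i', i ≠ i' → c i = 0 → c i' = 0 →
        (∀ j, j ≠ i → b i j = 0) → (∀ j, j ≠ i' → b i' j = 0) →
        ∑ l, d i l * d i' l = 0) :
    (∀ i, c i = 0 ∧ (∀ j, j ≠ i → b i j = 0) ∧ ∑ l, (d i l) ^ 2 = 1) ∧
    (∀ i i', ∑ l, d i l * d i' l = if i = i' then 1 else 0) ∧
    n ≤ m :=
  stmt_19_general n m a ha c b d heq horth
end
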